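/- arXiv:1211.3941 — 6 statements merged into one kernel-verified Lean document; each statement's English description precedes it below -/
import Mathlib

section
/- Let w ∈ ℕⁿ with |w| = w₁+⋯+wₙ even. The semistandard Young tableaux of shape (|w|/2, |w|/2) (two rows of equal length, weakly increasing rows, strictly increasing columns, entries in {1,…,n}) with content w are in bijection with tuples ν = (ν₁,…,νₙ) ∈ ℕⁿ satisfying ν₁+⋯+νₙ = |w|/2, 0 ≤ ν_ℓ ≤ w_ℓ for all ℓ, and 2(ν₁+⋯+ν_{ℓ−1}) + ν_ℓ ≥ w₁+⋯+w_ℓ for all 1 ≤ ℓ ≤ n. -/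
/-!
A weakly increasing row is determined by its content, and every content vector is the content of
some weakly increasing row (sort the multiset). So a tableau with content `w` is determined by the
content `ν` of its first row, the second row having content `w - ν`. In a weakly increasing row
the entries `< a` (or `≤ a`) fill an initial segment whose length is their number; hence the
column condition `f t < g t` holds for all `t` iff, for every `ℓ`, the second row has at most as
many entries `≤ ℓ` as the first row has entries `< ℓ`. Written in terms of `ν` and `w`, this is
`2 (ν₁ + ⋯ + ν_{ℓ-1}) + ν_ℓ ≥ w₁ + ⋯ + w_ℓ`.
-/

/-- A two-row tableau of shape (k,k) with entries in {1,…,n}, encoded as a pair of rows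
`Fin k → Fin n`, is semistandard if rows are weakly increasing and columns strictly
increasing. -/
def IsSSYT {n k : ℕ} (τ : (Fin k → Fin n) × (Fin k → Fin n)) : Prop :=
  (∀ s t, s ≤ t → τ.1 s ≤ τ.1 t) ∧ (∀ s t, s ≤ t → τ.2 s ≤ τ.2 t) ∧ (∀ t, τ.1 t < τ.2 t)

/-- The content of a two-row tableau: the number of occurrences of each value. -/
def content {n k : ℕ} (τ : (Fin k → Fin n) × (Fin k → Fin n)) (i : Fin n) : ℕ :=
  (Finset.univ.filter (fun t => τ.1 t = i)).card +
    (Finset.univ.filter (fun t => τ.2 t = i)).card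

open Finset

section MonotoneFin

variable {α : Type*} [LinearOrder α] {k : ℕ}

def fiberCard (f : Fin k → α) (a : α) : ℕ := #{t | f t = a}

theorem fiberCard_eq_count (f : Fin k → α) (a : α) :
    fiberCard f a = (univ.val.map f).count a := by
  rw [Multiset.count_map, fiberCard, card_def, filter_val]
  simp only [eq_comm]

theorem sum_fiberCard_filter [Fintype α] (f : Fin k → α) (p : α → Prop) [DecidablePred p] :
    ∑ a with p a, fiberCard f a = #{t | p (f t)} := by
  simp only [fiberCard, sum_card_fiberwise_eq_card_filter, mem_filter, mem_univ, true_and]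

theorem sum_fiberCard [Fintype α] (f : Fin k → α) : ∑ a, fiberCard f a = k := by
  simpa using sum_fiberCard_filter f (fun _ => True)

theorem Monotone.eq_of_map_univ_eq {f g : Fin k → α} (hf : Monotone f) (hg : Monotone g)
    (h : univ.val.map f = univ.val.map g) : f = g := by
  rw [Fin.univ_val_map, Fin.univ_val_map, Multiset.coe_eq_coe] at h
  exact List.ofFn_injective (h.eq_of_sortedLE hf.sortedLE_ofFn hg.sortedLE_ofFn)

theorem Multiset.exists_monotone_map_univ_eq (s : Multiset α) (hs : Multiset.card s = k) :
    ∃ f : Fin k → α, Monotone f ∧ univ.val.map f = s := by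
  set l := s.sort (· ≤ ·)
  rw [← Multiset.length_sort (· ≤ ·)] at hs
  subst hs
  refine ⟨l.get, (Multiset.pairwise_sort s _).sortedLE.monotone_get, ?_⟩
  rw [Fin.univ_val_map, List.ofFn_get, Multiset.sort_eq]

theorem Monotone.eq_of_fiberCard_eq {f g : Fin k → α} (hf : Monotone f) (hg : Monotone g)
    (h : fiberCard f = fiberCard g) : f = g :=
  hf.eq_of_map_univ_eq hg <| Multiset.ext.2 fun a => by
    rw [← fiberCard_eq_count, ← fiberCard_eq_count, h]

theorem exists_monotone_fiberCard_eq [Fintype α] (c : α → ℕ) (hc : ∑ a, c a = k) :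
    ∃ f : Fin k → α, Monotone f ∧ fiberCard f = c := by
  have hcard : Multiset.card (∑ a, c a • ({a} : Multiset α)) = k := by
    simp [Multiset.card_sum, hc]
  obtain ⟨f, hf, hmap⟩ := Multiset.exists_monotone_map_univ_eq _ hcard
  refine ⟨f, hf, funext fun a => ?_⟩
  simp [fiberCard_eq_count, hmap, Multiset.count_sum', Multiset.count_singleton]

theorem Monotone.apply_iff_lt_card {f : Fin k → α} (hf : Monotone f) {p : α → Prop}
    [DecidablePred p] (hp : Antitone p) (t : Fin k) :
    p (f t) ↔ (t : ℕ) < #{s | p (f s)} := by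
  constructor
  · intro ht
    have hsub : Iic t ⊆ ({s | p (f s)} : Finset (Fin k)) := fun s hs =>
      mem_filter.2 ⟨mem_univ s, hp (hf (mem_Iic.1 hs)) ht⟩
    have := card_le_card hsub
    rw [Fin.card_Iic] at this
    omega
  · intro ht
    by_contra hnot
    have hsub : ({s | p (f s)} : Finset (Fin k)) ⊆ Iio t := fun s hs =>
      mem_Iio.2 (lt_of_not_ge fun hts => hnot (hp (hf hts) (mem_filter.1 hs).2))
    have := card_le_card hsub
    rw [Fin.card_Iio] at this
    omega

theorem Monotone.forall_lt_iff_card_le {f g : Fin k → α} (hf : Monotone f) (hg : Monotone g) :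
    (∀ t, f t < g t) ↔ ∀ a, #{t | g t ≤ a} ≤ #{t | f t < a} := by
  constructor
  · intro hfg a
    exact card_le_card fun t ht => by
      simp only [mem_filter, mem_univ, true_and] at ht ⊢
      exact (hfg t).trans_le ht
  · intro hcard t
    have hle : (t : ℕ) < #{s | g s ≤ g t} :=
      (hg.apply_iff_lt_card (fun _ _ hab h => hab.trans h) t).1 le_rfl
    exact (hf.apply_iff_lt_card (fun _ _ hab h => hab.trans_lt h) t).2 (hle.trans_le (hcard _))

theorem Monotone.forall_lt_iff_dominance [Fintype α] [LocallyFiniteOrderBot α]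
    {f g : Fin k → α} (hf : Monotone f) (hg : Monotone g) {w : α → ℕ} (hw : ∀ a, fiberCard f a + fiberCard g a = w a) :
    (∀ t, f t < g t) ↔ ∀ ℓ, 2 * (∑ i ∈ univ.filter (· < ℓ), fiberCard f i) + fiberCard f ℓ ≥
      ∑ i ∈ univ.filter (· ≤ ℓ), w i := by
  rw [hf.forall_lt_iff_card_le hg]
  refine forall_congr' fun ℓ => ?_
  have hg_le := sum_fiberCard_filter g (· ≤ ℓ)
  have hf_lt := sum_fiberCard_filter f (· < ℓ)
  have hw_le : ∑ i ∈ univ.filter (· ≤ ℓ), w i =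
      ∑ i ∈ univ.filter (· ≤ ℓ), fiberCard f i + ∑ i ∈ univ.filter (· ≤ ℓ), fiberCard g i := by
    rw [← sum_add_distrib]
    exact sum_congr rfl fun a _ => (hw a).symm
  have hf_le : ∑ i ∈ univ.filter (· ≤ ℓ), fiberCard f i =
      fiberCard f ℓ + ∑ i ∈ univ.filter (· < ℓ), fiberCard f i := by
    rw [filter_ge_eq_Iic, filter_gt_eq_Iio, add_sum_Iio_eq_sum_Iic]
  omega

end MonotoneFin

section TwoRowTableau

variable {n k : ℕ}

theorem isSSYT_mk_iff (f g : Fin k → Fin n) :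
    IsSSYT (f, g) ↔ Monotone f ∧ Monotone g ∧ ∀ t, f t < g t :=
  Iff.rfl

theorem content_mk_eq_iff (f g : Fin k → Fin n) (w : Fin n → ℕ) :
    content (f, g) = w ↔ ∀ a, fiberCard f a + fiberCard g a = w a :=
  funext_iff

def firstRowContent (w : Fin n → ℕ) (k : ℕ)
    (τ : {τ : (Fin k → Fin n) × (Fin k → Fin n) // IsSSYT τ ∧ content τ = w}) :
    {ν : Fin n → ℕ // (∑ i, ν i) = k ∧ (∀ ℓ, ν ℓ ≤ w ℓ) ∧
      ∀ ℓ : Fin n, 2 * (∑ i ∈ univ.filter (· < ℓ), ν i) + ν ℓ ≥ ∑ i ∈ univ.filter (· ≤ ℓ), w i} :=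
  ⟨fiberCard τ.1.1, by
    obtain ⟨⟨f, g⟩, hτ, hw⟩ := τ
    obtain ⟨hf, hg, hfg⟩ := (isSSYT_mk_iff _ _).1 hτ
    rw [content_mk_eq_iff] at hw
    exact ⟨sum_fiberCard f, fun ℓ => (Nat.le_add_right _ _).trans_eq (hw ℓ),
      (hf.forall_lt_iff_dominance hg hw).1 hfg⟩⟩

theorem firstRowContent_injective (w : Fin n → ℕ) (k : ℕ) :
    Function.Injective (firstRowContent w k) := by
  rintro ⟨⟨f, g⟩, hτ, hw⟩ ⟨⟨f', g'⟩, hτ', hw'⟩ h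
  obtain ⟨hf, hg, -⟩ := (isSSYT_mk_iff _ _).1 hτ
  obtain ⟨hf', hg', -⟩ := (isSSYT_mk_iff _ _).1 hτ'
  rw [content_mk_eq_iff] at hw hw'
  have hff' : fiberCard f = fiberCard f' := congrArg Subtype.val h
  have hgg' : fiberCard g = fiberCard g' := funext fun a => by
    have := congrFun hff' a
    have := hw a
    have := hw' a
    omega
  simp only [Subtype.mk.injEq, Prod.mk.injEq]
  exact ⟨hf.eq_of_fiberCard_eq hf' hff', hg.eq_of_fiberCard_eq hg' hgg'⟩

theorem firstRowContent_surjective {w : Fin n → ℕ} {k : ℕ} (hk : ∑ i, w i = 2 * k) :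
    Function.Surjective (firstRowContent w k) := by
  rintro ⟨ν, hsum, hle, hdom⟩
  obtain ⟨f, hf, rfl⟩ := exists_monotone_fiberCard_eq ν hsum
  have hsum' : ∑ a, (w a - fiberCard f a) = k := by
    rw [sum_tsub_distrib _ fun a _ => hle a]
    omega
  obtain ⟨g, hg, hgc⟩ := exists_monotone_fiberCard_eq _ hsum'
  have hw : ∀ a, fiberCard f a + fiberCard g a = w a := fun a => by
    rw [hgc]
    exact Nat.add_sub_cancel' (hle a)
  exact ⟨⟨(f, g), ⟨hf, hg, (hf.forall_lt_iff_dominance hg hw).2 hdom⟩, funext hw⟩, rfl⟩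

end TwoRowTableau

/-- For w ∈ ℕⁿ with |w| even, the semistandard Young tableaux of shape (|w|/2, |w|/2) with
content w are in bijection with tuples ν ∈ ℕⁿ with ∑ νᵢ = |w|/2, ν_ℓ ≤ w_ℓ, and
2(ν₁+⋯+ν_{ℓ−1}) + ν_ℓ ≥ w₁+⋯+w_ℓ for all ℓ; the bijection records in ν_i the number of
occurrences of i in the first row. -/
theorem stmt2 (n : ℕ) (w : Fin n → ℕ) (hw : Even (∑ i, w i)) :
    ∃ e : {τ : (Fin ((∑ i, w i) / 2) → Fin n) × (Fin ((∑ i, w i) / 2) → Fin n) //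
            IsSSYT τ ∧ content τ = w} ≃
          {ν : Fin n → ℕ // (∑ i, ν i) = (∑ i, w i) / 2 ∧ (∀ ℓ, ν ℓ ≤ w ℓ) ∧
            ∀ ℓ : Fin n, 2 * (∑ i ∈ Finset.univ.filter (· < ℓ), ν i) + ν ℓ ≥
              ∑ i ∈ Finset.univ.filter (· ≤ ℓ), w i},
      ∀ τ, (e τ).val = fun i => (Finset.univ.filter (fun t => τ.val.1 t = i)).card := by
  have hk : ∑ i, w i = 2 * ((∑ i, w i) / 2) := (Nat.two_mul_div_two_of_even hw).symm
  exact ⟨.ofBijective _ ⟨firstRowContent_injective w _, firstRowContent_surjective hk⟩,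
    fun _ => rfl⟩
end

section
/- Let n ≥ 4 and w ∈ (2ℕ)ⁿ. Define P_w ⊆ ℝ^{n−3} as the set of (u(2),…,u(n−2)) such that the triples (w₁, w₂, u(2)), (u(n−2), w_{n−1}, wₙ), and (u(i−1), wᵢ, u(i)) for 3 ≤ i ≤ n−2 all satisfy the triangle inequalities (x+y ≥ z, x+z ≥ y, y+z ≥ x). Then for any two lattice points v, v' ∈ P_w ∩ (2ℤ)^{n−3}, there exist u, u' ∈ P_w ∩ (2ℤ)^{n−3} with u + u' = v + v' and |u(i) − u'(i)| ≤ 2 for all 2 ≤ i ≤ n−2. -/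
/-- (x,y,z) satisfies the triangle inequalities: x+y ≥ z, x+z ≥ y, y+z ≥ x. -/
def TriIneq (x y z : ℤ) : Prop := z ≤ x + y ∧ y ≤ x + z ∧ x ≤ y + z

/-- Membership of u (with coordinates u(2),…,u(n−2)) in the polytope P_w:
(w₁,w₂,u(2)), (u(n−2),w_{n−1},wₙ), and (u(i−1),wᵢ,u(i)) for 3 ≤ i ≤ n−2 satisfy the
triangle inequalities. -/
def MemPw (n : ℕ) (w : ℕ → ℕ) (u : ℕ → ℤ) : Prop :=
  TriIneq (w 1) (w 2) (u 2) ∧ TriIneq (u (n - 2)) (w (n - 1)) (w n) ∧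
    ∀ i, 3 ≤ i → i ≤ n - 2 → TriIneq (u (i - 1)) (w i) (u i)

/-- midpoint (rounded down) -/
def sA (v v' : ℕ → ℤ) (i : ℕ) : ℤ := (v i + v' i) / 2

/-- sign choice for rounding -/
def dS (w : ℕ → ℕ) (v v' : ℕ → ℤ) : ℕ → ℤ
  | 0 => 0
  | 1 => 0
  | 2 => if sA v v' 2 % 2 = 0 then 0 else 1
  | (i+3) => if sA v v' (i+3) % 2 = 0 then 0
      else if sA v v' (i+2) % 2 = 0 then 1
      else if ((w (i+3) : ℤ)) = sA v v' (i+2) + sA v v' (i+3) then - dS w v v' (i+2)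
      else dS w v v' (i+2)

theorem dS_zero (w : ℕ → ℕ) (v v' : ℕ → ℤ) : ∀ i, sA v v' i % 2 = 0 → dS w v v' i = 0
  | 0, _ => rfl
  | 1, _ => rfl
  | 2, h => by simp [dS, h]
  | (i+3), h => by simp [dS, h]

theorem dS_pm (w : ℕ → ℕ) (v v' : ℕ → ℤ) :
    ∀ i, 2 ≤ i → sA v v' i % 2 ≠ 0 → dS w v v' i = 1 ∨ dS w v v' i = -1
  | 2, _, h => by simp [dS, h]
  | (i+3), _, h => by
      have ih := dS_pm w v v' (i+2) (by omega)
      by_cases h2 : sA v v' (i+2) % 2 = 0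
      · simp [dS, h, h2]
      · have := ih h2
        by_cases h3 : ((w (i+3) : ℤ)) = sA v v' (i+2) + sA v v' (i+3) <;>
          simp [dS, h, h2, h3] <;> omega

theorem dS_rec (w : ℕ → ℕ) (v v' : ℕ → ℤ) (i : ℕ)
    (h : sA v v' (i+3) % 2 ≠ 0) (h2 : sA v v' (i+2) % 2 ≠ 0) :
    (((w (i+3) : ℤ)) = sA v v' (i+2) + sA v v' (i+3) → dS w v v' (i+3) = - dS w v v' (i+2)) ∧
    (((w (i+3) : ℤ)) ≠ sA v v' (i+2) + sA v v' (i+3) → dS w v v' (i+3) = dS w v v' (i+2)) := by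
  constructor <;> intro h3 <;> simp [dS, h, h2, h3]

/-- Let n ≥ 4 and w ∈ (2ℕ)ⁿ. For any two lattice points v, v' ∈ P_w ∩ (2ℤ)^{n−3} there
exist u, u' ∈ P_w ∩ (2ℤ)^{n−3} with u + u' = v + v' and |u(i) − u'(i)| ≤ 2 for all
2 ≤ i ≤ n−2. -/
theorem stmt12 (n : ℕ) (hn : 4 ≤ n) (w : ℕ → ℕ) (hw : ∀ i, Even (w i))
    (v v' : ℕ → ℤ) (hv : MemPw n w v) (hv' : MemPw n w v')
    (hvev : ∀ i, 2 ≤ i → i ≤ n - 2 → Even (v i))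
    (hv'ev : ∀ i, 2 ≤ i → i ≤ n - 2 → Even (v' i)) :
    ∃ u u' : ℕ → ℤ, MemPw n w u ∧ MemPw n w u' ∧
      ∀ i, 2 ≤ i → i ≤ n - 2 →
        Even (u i) ∧ Even (u' i) ∧ u i + u' i = v i + v' i ∧ |u i - u' i| ≤ 2 := by
  set s := sA v v' with hs
  set d := dS w v v' with hd
  have hwm : ∀ i, (w i : ℤ) % 2 = 0 := by
    intro i
    have := (Nat.even_iff).mp (hw i)
    omega
  have hsum : ∀ i, 2 ≤ i → i ≤ n - 2 → v i + v' i = 2 * s i := by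
    intro i h2 h3
    have h1 := Int.even_iff.mp (hvev i h2 h3)
    have h2' := Int.even_iff.mp (hv'ev i h2 h3)
    have : s i = (v i + v' i) / 2 := rfl
    omega
  have hd0 : ∀ i, s i % 2 = 0 → d i = 0 := dS_zero w v v'
  have hd1 : ∀ i, 2 ≤ i → s i % 2 ≠ 0 → d i = 1 ∨ d i = -1 := dS_pm w v v'
  -- triple at index 2 (boundary)
  have first : ∀ e : ℤ, (e = d 2 ∨ e = - d 2) → TriIneq (w 1) (w 2) (s 2 + e) := by
    intro e he
    obtain ⟨a1, a2, a3⟩ := hv.1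
    obtain ⟨b1, b2, b3⟩ := hv'.1
    have h2 := hsum 2 le_rfl (by omega)
    have hw1 := hwm 1; have hw2 := hwm 2
    by_cases hq : s 2 % 2 = 0
    · have := hd0 2 hq
      refine ⟨?_, ?_, ?_⟩ <;> omega
    · have := hd1 2 le_rfl hq
      refine ⟨?_, ?_, ?_⟩ <;> omega
  -- triple at index n-2 (boundary)
  have last : ∀ e : ℤ, (e = d (n-2) ∨ e = - d (n-2)) →
      TriIneq (s (n-2) + e) (w (n-1)) (w n) := by
    intro e he
    obtain ⟨a1, a2, a3⟩ := hv.2.1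
    obtain ⟨b1, b2, b3⟩ := hv'.2.1
    have h2 := hsum (n-2) (by omega) le_rfl
    have hw1 := hwm (n-1); have hw2 := hwm n
    by_cases hq : s (n-2) % 2 = 0
    · have := hd0 (n-2) hq
      refine ⟨?_, ?_, ?_⟩ <;> omega
    · have := hd1 (n-2) (by omega) hq
      refine ⟨?_, ?_, ?_⟩ <;> omega
  -- middle triples, with sign σ = ±1
  have mid : ∀ (σ : ℤ), (σ = 1 ∨ σ = -1) → ∀ i, 3 ≤ i → i ≤ n - 2 →
      TriIneq (s (i-1) + σ * d (i-1)) (w i) (s i + σ * d i) := by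
    intro σ hσ i h3 hn2
    obtain ⟨m, rfl⟩ : ∃ m, i = m + 3 := ⟨i - 3, by omega⟩
    obtain ⟨a1, a2, a3⟩ := hv.2.2 (m+3) h3 hn2
    obtain ⟨b1, b2, b3⟩ := hv'.2.2 (m+3) h3 hn2
    have hidx : m + 3 - 1 = m + 2 := rfl
    rw [hidx] at a1 a2 a3 b1 b2 b3 ⊢
    have hq := hsum (m+3) (by omega) hn2
    have hp := hsum (m+2) (by omega) (by omega)
    have hwi := hwm (m+3)
    by_cases hq2 : s (m+3) % 2 = 0
    · have hbq := hd0 (m+3) hq2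
      by_cases hp2 : s (m+2) % 2 = 0
      · have hbp := hd0 (m+2) hp2
        rcases hσ with rfl | rfl <;> refine ⟨?_, ?_, ?_⟩ <;> simp only [one_mul, neg_one_mul] <;> omega
      · have hbp := hd1 (m+2) (by omega) hp2
        rcases hσ with rfl | rfl <;> refine ⟨?_, ?_, ?_⟩ <;> simp only [one_mul, neg_one_mul] <;> omega
    · have hbq := hd1 (m+3) (by omega) hq2
      by_cases hp2 : s (m+2) % 2 = 0
      · have hbp := hd0 (m+2) hp2
        rcases hσ with rfl | rfl <;> refine ⟨?_, ?_, ?_⟩ <;> simp only [one_mul, neg_one_mul] <;> omega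
      · have hbp := hd1 (m+2) (by omega) hp2
        obtain ⟨r1, r2⟩ := dS_rec w v v' m hq2 hp2
        rw [← hd, ← hs] at r1 r2
        by_cases ht : ((w (m+3) : ℤ)) = s (m+2) + s (m+3)
        · have := r1 ht
          rcases hσ with rfl | rfl <;> refine ⟨?_, ?_, ?_⟩ <;> simp only [one_mul, neg_one_mul] <;> omega
        · have := r2 ht
          rcases hσ with rfl | rfl <;> refine ⟨?_, ?_, ?_⟩ <;> simp only [one_mul, neg_one_mul] <;> omega
  refine ⟨fun i => s i + d i, fun i => s i - d i, ⟨?_, ?_, ?_⟩, ⟨?_, ?_, ?_⟩, ?_⟩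
  · exact first (d 2) (Or.inl rfl)
  · exact last (d (n-2)) (Or.inl rfl)
  · intro i h3 hn2
    have := mid 1 (Or.inl rfl) i h3 hn2
    simpa using this
  · have := first (- d 2) (Or.inr rfl)
    show TriIneq _ _ (s 2 - d 2)
    rw [show s 2 - d 2 = s 2 + (- d 2) by ring]
    exact this
  · have := last (- d (n-2)) (Or.inr rfl)
    show TriIneq (s (n-2) - d (n-2)) _ _
    rw [show s (n-2) - d (n-2) = s (n-2) + (- d (n-2)) by ring]
    exact this
  · intro i h3 hn2
    have := mid (-1) (Or.inr rfl) i h3 hn2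
    show TriIneq (s (i-1) - d (i-1)) _ (s i - d i)
    rw [show s (i-1) - d (i-1) = s (i-1) + (-1) * d (i-1) by ring,
        show s i - d i = s i + (-1) * d i by ring]
    exact this
  · intro i h2 h3
    have hsi := hsum i h2 h3
    show Even (s i + d i) ∧ Even (s i - d i) ∧ (s i + d i) + (s i - d i) = v i + v' i ∧
      |(s i + d i) - (s i - d i)| ≤ 2
    by_cases hq : s i % 2 = 0
    · have := hd0 i hq
      refine ⟨?_, ?_, by omega, ?_⟩
      · rw [Int.even_iff]; omega
      · rw [Int.even_iff]; omega
      · rw [abs_le]; omega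
    · have := hd1 i h2 hq
      refine ⟨?_, ?_, by omega, ?_⟩
      · rw [Int.even_iff]; omega
      · rw [Int.even_iff]; omega
      · rw [abs_le]; omega
end

section
/- Let n ≥ 4 and w ∈ (2ℕ)ⁿ, and let P_w ⊆ ℝ^{n−3} be the polytope of points u with (w₁,w₂,u(2)), (u(n−2),w_{n−1},wₙ), and (u(i−1),wᵢ,u(i)) (3 ≤ i ≤ n−2) satisfying the triangle inequalities. Then P_w is normal with respect to the lattice M = (2ℤ)^{n−3}: for every m ≥ 1, every lattice point in mP_w ∩ M is a sum of m lattice points of P_w ∩ M. -/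
set_option maxHeartbeats 1000000


/-- Membership of r in the m-fold dilate m·P_w (the defining inequalities are
homogeneous, so r ∈ m·P_w iff the inequalities hold with w replaced by m·w). -/
def MemPwDilate (n m : ℕ) (w : ℕ → ℕ) (r : ℕ → ℤ) : Prop :=
  TriIneq (m * w 1) (m * w 2) (r 2) ∧ TriIneq (r (n - 2)) (m * w (n - 1)) (m * w n) ∧
    ∀ i, 3 ≤ i → i ≤ n - 2 → TriIneq (r (i - 1)) (m * w i) (r i)

private lemma even_max {a b : ℤ} (ha : Even a) (hb : Even b) : Even (max a b) := by
  rcases max_choice a b with h | h <;> rw [h] <;> assumption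

private lemma even_min {a b : ℤ} (ha : Even a) (hb : Even b) : Even (min a b) := by
  rcases min_choice a b with h | h <;> rw [h] <;> assumption

private lemma even_abs' {a : ℤ} (ha : Even a) : Even |a| := by
  rcases abs_choice a with h | h <;> rw [h]
  · exact ha
  · exact ha.neg

private lemma even_small {m X e : ℤ} (hm : 2 ≤ m) (hX : Even X) (h : m * X ≤ e)
    (he : e ≤ m) : X ≤ 0 := by
  obtain ⟨k, hk⟩ := hX
  by_contra hc
  push_neg at hc
  have hk1 : 1 ≤ k := by omega
  nlinarith

private lemma even_small' {m X e : ℤ} (hm : 2 ≤ m) (hX : Even X) (h : m * X ≤ e)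
    (he1 : -m ≤ e) (he2 : e ≤ m) : (m - 1) * X ≤ e := by
  have h0 : X ≤ 0 := even_small hm hX h he2
  obtain ⟨k, hk⟩ := hX
  rcases h0.lt_or_eq with h1 | h1
  · have h2 : X ≤ -2 := by omega
    nlinarith [mul_le_mul_of_nonneg_left h2 (by linarith : (0:ℤ) ≤ m - 1)]
  · rw [h1] at h ⊢
    simpa using h

private lemma final_step {m s S w z : ℤ} (hm : 2 ≤ m)
    (hs : Even s) (hw : Even w) (hz : Even z)
    (he0 : |S - (m - 1) * s| ≤ m)
    (htri : TriIneq (S + s) (m * w) (m * z)) :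
    TriIneq s w z ∧ TriIneq S ((m - 1) * w) ((m - 1) * z) := by
  obtain ⟨ht1, ht2, ht3⟩ := htri
  have hel := (abs_le.mp he0).1
  have heu := (abs_le.mp he0).2
  have h1 : m * (z - s - w) ≤ S - (m - 1) * s := by nlinarith [ht1]
  have h2 : m * (w - s - z) ≤ S - (m - 1) * s := by nlinarith [ht2]
  have h3 : m * (s - w - z) ≤ -(S - (m - 1) * s) := by nlinarith [ht3]
  have e1 : Even (z - s - w) := (hz.sub hs).sub hw
  have e2 : Even (w - s - z) := (hw.sub hs).sub hz
  have e3 : Even (s - w - z) := (hs.sub hw).sub hz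
  have s1 := even_small hm e1 h1 heu
  have s2 := even_small hm e2 h2 heu
  have s3 := even_small hm e3 h3 (by linarith)
  have r1 := even_small' hm e1 h1 hel heu
  have r2 := even_small' hm e2 h2 hel heu
  have r3 := even_small' hm e3 h3 (by linarith) (by linarith)
  refine ⟨⟨by linarith, by linarith, by linarith⟩, ⟨by nlinarith [r1], by nlinarith [r2], by nlinarith [r3]⟩⟩

private lemma pair_step {m s S w ρ : ℤ} (hm : 2 ≤ m)
    (hs : Even s) (hS : Even S) (hw : Even w) (hρ : Even ρ)
    (hs0 : 0 ≤ s) (hS0 : 0 ≤ S) (hw0 : 0 ≤ w)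
    (he0 : |S - (m - 1) * s| ≤ m)
    (htri : TriIneq (S + s) (m * w) ρ) :
    ∃ x : ℤ, Even x ∧ 0 ≤ x ∧ 0 ≤ ρ - x ∧ |ρ - m * x| ≤ m ∧
      TriIneq s w x ∧ TriIneq S ((m - 1) * w) (ρ - x) := by
  obtain ⟨ht1, ht2, ht3⟩ := htri
  have hel := (abs_le.mp he0).1
  have heu := (abs_le.mp he0).2
  have hm0 : (0:ℤ) ≤ m - 1 := by linarith
  have hW0 : 0 ≤ (m - 1) * w := mul_nonneg hm0 hw0
  set d := s - w with hd
  set D := S - (m - 1) * w with hD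
  have hevd : Even d := hs.sub hw
  have hevD : Even D := hS.sub (hw.mul_left _)
  have hDd : D = (m - 1) * d + (S - (m - 1) * s) := by rw [hd, hD]; ring
  have hsum : d + D = S + s - m * w := by rw [hd, hD]; ring
  -- f1 : |d| + |D| ≤ ρ
  have f1 : |d| + |D| ≤ ρ := by
    rcases lt_trichotomy d 0 with hdc | hdc | hdc
    · have hd2 : d ≤ -2 := by obtain ⟨t, ht⟩ := hevd; omega
      have hmul : (m - 1) * d ≤ (m - 1) * (-2) := mul_le_mul_of_nonneg_left hd2 hm0
      have hDneg : D ≤ 0 := by nlinarith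
      rw [abs_of_nonpos hdc.le, abs_of_nonpos hDneg]
      linarith
    · rw [hdc, abs_zero, zero_add, abs_le]
      rw [hdc] at hsum
      constructor <;> linarith
    · have hd2 : 2 ≤ d := by obtain ⟨t, ht⟩ := hevd; omega
      have hmul : (m - 1) * 2 ≤ (m - 1) * d := mul_le_mul_of_nonneg_left hd2 hm0
      have hDpos : 0 ≤ D := by nlinarith
      rw [abs_of_nonneg hdc.le, abs_of_nonneg hDpos]
      linarith
  have f2 : ρ ≤ S + s + m * w := by linarith
  have f3 : |D| ≤ (m - 1) * |d| + m := by
    calc |D| = |(m - 1) * d + (S - (m - 1) * s)| := by rw [hDd]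
    _ ≤ |(m - 1) * d| + |S - (m - 1) * s| := abs_add_le _ _
    _ ≤ (m - 1) * |d| + m := by rw [abs_mul, abs_of_nonneg hm0]; linarith
  have f4 : (m - 1) * |d| ≤ |D| + m := by
    have h1 : (m - 1) * |d| = |(m - 1) * d| := by rw [abs_mul, abs_of_nonneg hm0]
    have h2 : |(m - 1) * d| = |D - (S - (m - 1) * s)| := by rw [hDd]; ring_nf
    calc (m - 1) * |d| = |D - (S - (m - 1) * s)| := by rw [h1, h2]
    _ ≤ |D| + |S - (m - 1) * s| := abs_sub _ _
    _ ≤ |D| + m := by linarith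
  -- intervals
  set L := max |d| (ρ - S - (m - 1) * w) with hL
  set U := min (s + w) (ρ - |D|) with hU
  have hA1 : |d| ≤ s + w := by
    rw [abs_le]; constructor <;> [skip; skip] <;> rw [hd] <;> linarith
  have hA2 : |d| ≤ ρ - |D| := by linarith
  have hB1 : ρ - S - (m - 1) * w ≤ s + w := by nlinarith
  have hB2 : ρ - S - (m - 1) * w ≤ ρ - |D| := by
    have : |D| ≤ S + (m - 1) * w := by
      rw [abs_le]; constructor <;> rw [hD] <;> linarith
    linarith
  have hLU : L ≤ U := max_le (le_min hA1 hA2) (le_min hB1 hB2)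
  -- ideal point
  have h2m : (0:ℤ) < 2 * m := by linarith
  set x0 := 2 * ((ρ + m) / (2 * m)) with hx0def
  have hdiv := Int.mul_ediv_add_emod (ρ + m) (2 * m)
  have hmod0 := Int.emod_nonneg (ρ + m) (by linarith : (2 * m : ℤ) ≠ 0)
  have hmodlt := Int.emod_lt_of_pos (ρ + m) h2m
  have keyx0 : m * x0 = 2 * m * ((ρ + m) / (2 * m)) := by rw [hx0def]; ring
  have hx0 : |ρ - m * x0| ≤ m := by rw [abs_le]; constructor <;> linarith
  have hevx0 : Even x0 := ⟨(ρ + m) / (2 * m), by rw [hx0def]; ring⟩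
  have hevL : Even L := even_max (even_abs' hevd) (((hρ.sub hS).sub (hw.mul_left _)))
  have hevU : Even U := even_min (hs.add hw) (hρ.sub (even_abs' hevD))
  set x := max L (min U x0) with hx
  have hevx : Even x := even_max hevL (even_min hevU hevx0)
  have hxL : L ≤ x := le_max_left _ _
  have hxU : x ≤ U := max_le hLU (min_le_left _ _)
  have hxA : |d| ≤ x := le_trans (le_max_left _ _) hxL
  have hx1 : ρ - S - (m - 1) * w ≤ x := le_trans (le_max_right _ _) hxL
  have hx2 : x ≤ s + w := le_trans hxU (min_le_left _ _)
  have hx3 : x ≤ ρ - |D| := le_trans hxU (min_le_right _ _)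
  -- the key invariant
  have hinv : |ρ - m * x| ≤ m := by
    rcases lt_or_ge x0 L with hcl | hgeL
    · -- clamped up to L
      have hminU : min U x0 = x0 := min_eq_right (hcl.le.trans hLU)
      have hxval : x = L := by rw [hx, hminU, max_eq_left hcl.le]
      have hgap : x0 ≤ L - 2 := by
        obtain ⟨t, ht⟩ := hevL.sub hevx0; omega
      have hup : ρ - m * L ≤ m := by
        have h1 := (abs_le.mp hx0).2
        have h2 : m * x0 ≤ m * (L - 2) := mul_le_mul_of_nonneg_left hgap (by linarith)
        have h3 : m * (L - 2) = m * L - 2 * m := by ring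
        linarith
      have hlo : -m ≤ ρ - m * L := by
        rcases max_choice |d| (ρ - S - (m - 1) * w) with hLc | hLc
        · rw [hL, hLc]
          have hexp : (m - 1) * |d| = m * |d| - |d| := by ring
          linarith
        · rw [hL, hLc]
          have hmul : (m - 1) * ρ ≤ (m - 1) * (S + s + m * w) := mul_le_mul_of_nonneg_left f2 hm0
          have hident : m * S + m * ((m - 1) * w) - (m - 1) * (S + s + m * w) = S - (m - 1) * s := by ring
          have hexp : ρ - m * (ρ - S - (m - 1) * w) = m * S + m * ((m - 1) * w) - (m - 1) * ρ := by ring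
          linarith
      rw [hxval, abs_le]; exact ⟨hlo, hup⟩
    · rcases lt_or_ge U x0 with hcu | hleU
      · -- clamped down to U
        have hxval : x = U := by rw [hx, min_eq_left hcu.le, max_eq_right hLU]
        have hgap : U + 2 ≤ x0 := by
          obtain ⟨t, ht⟩ := hevx0.sub hevU; omega
        have hlo : -m ≤ ρ - m * U := by
          have h1 := (abs_le.mp hx0).1
          have h2 : m * (U + 2) ≤ m * x0 := mul_le_mul_of_nonneg_left hgap (by linarith)
          have h3 : m * (U + 2) = m * U + 2 * m := by ring
          linarith
        have hup : ρ - m * U ≤ m := by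
          rcases min_choice (s + w) (ρ - |D|) with hUc | hUc
          · rw [hU, hUc]
            have hident : S + s + m * w - m * (s + w) = S - (m - 1) * s := by ring
            linarith
          · rw [hU, hUc]
            have hmul : (m - 1) * (|d| + |D|) ≤ (m - 1) * ρ := mul_le_mul_of_nonneg_left f1 hm0
            have hexp1 : (m - 1) * (|d| + |D|) = (m - 1) * |d| + (m - 1) * |D| := by ring
            have hexp2 : m * |D| = (m - 1) * |D| + |D| := by ring
            have hexp3 : ρ - m * (ρ - |D|) = m * |D| - (m - 1) * ρ := by ring
            linarith
        rw [hxval, abs_le]; exact ⟨hlo, hup⟩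
      · -- unclamped
        have hxval : x = x0 := by rw [hx, min_eq_right hleU, max_eq_right hgeL]
        rw [hxval]; exact hx0
  refine ⟨x, hevx, le_trans (abs_nonneg d) hxA, by linarith [abs_nonneg D], hinv, ?_, ?_⟩
  · exact ⟨hx2, by linarith [neg_abs_le d, hxA], by linarith [le_abs_self d, hxA]⟩
  · refine ⟨by linarith, ?_, ?_⟩
    · have := neg_abs_le D
      rw [hD] at this
      linarith
    · have := le_abs_self D
      rw [hD] at this
      linarith

private lemma TriIneq.of_eq {x y z x' y' z' : ℤ} (h : TriIneq x y z)
    (hx : x = x') (hy : y = y') (hz : z = z') : TriIneq x' y' z' := by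
  subst hx; subst hy; subst hz; exact h

private lemma chain (n : ℕ) (w : ℕ → ℕ) (m : ℕ) (hm : 2 ≤ m)
    (r : ℕ → ℤ) (hr : MemPwDilate n m w r)
    (hw : ∀ i, Even (w i))
    (hrev : ∀ i, 2 ≤ i → i ≤ n - 2 → Even (r i)) :
    ∀ k, 2 ≤ k → k ≤ n - 2 → ∃ u : ℕ → ℤ,
      (∀ i, Even (u i)) ∧ 0 ≤ u k ∧ 0 ≤ r k - u k ∧ |r k - m * u k| ≤ m ∧
      TriIneq (w 1) (w 2) (u 2) ∧
      TriIneq (((m:ℤ) - 1) * w 1) (((m:ℤ) - 1) * w 2) (r 2 - u 2) ∧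
      ∀ i, 3 ≤ i → i ≤ k →
        TriIneq (u (i - 1)) (w i) (u i) ∧
        TriIneq (r (i - 1) - u (i - 1)) (((m:ℤ) - 1) * w i) (r i - u i) := by
  have hmz : (2:ℤ) ≤ (m:ℤ) := by exact_mod_cast hm
  intro k hk2
  induction k, hk2 using Nat.le_induction with
  | base =>
    intro hkn
    have h1' : TriIneq ((m:ℤ) * w 1) ((m:ℤ) * w 2) (r 2) :=
      hr.1.of_eq (by push_cast; ring) (by push_cast; ring) rfl
    obtain ⟨x, hxe, hx0', hxr, hxinv, hxt1, hxt2⟩ :=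
      pair_step (m := (m:ℤ)) (s := (w 1 : ℤ)) (S := ((m:ℤ) - 1) * w 1)
        (w := (w 2 : ℤ)) (ρ := r 2) hmz
        (by exact_mod_cast hw 1)
        (Even.mul_left (by exact_mod_cast hw 1) _)
        (by exact_mod_cast hw 2)
        (hrev 2 le_rfl hkn)
        (by positivity)
        (mul_nonneg (by linarith) (by positivity))
        (by positivity)
        (by simp)
        (h1'.of_eq (by ring) rfl rfl)
    refine ⟨fun _ => x, fun _ => hxe, hx0', hxr, hxinv, hxt1, hxt2, ?_⟩
    intro i h3 h2; omega
  | succ k hk2 ih =>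
    intro hkn
    obtain ⟨u, hue, hu0, hur0, huinv, hu1, hu2, humid⟩ := ih (by omega)
    have htri' : TriIneq (r k) ((m:ℤ) * w (k+1)) (r (k+1)) := by
      have h := hr.2.2 (k+1) (by omega) hkn
      have hk1 : k + 1 - 1 = k := by omega
      rw [hk1] at h
      exact h.of_eq rfl (by push_cast; ring) rfl
    obtain ⟨x, hxe, hx0', hxr, hxinv, hxt1, hxt2⟩ :=
      pair_step (m := (m:ℤ)) (s := u k) (S := r k - u k)
        (w := (w (k+1) : ℤ)) (ρ := r (k+1)) hmz
        (hue k)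
        ((hrev k (by omega) (by omega)).sub (hue k))
        (by exact_mod_cast hw (k+1))
        (hrev (k+1) (by omega) hkn)
        hu0 hur0
        (by positivity)
        (by rw [show r k - u k - ((m:ℤ) - 1) * u k = r k - (m:ℤ) * u k from by ring]; exact huinv)
        (htri'.of_eq (by ring) rfl rfl)
    refine ⟨Function.update u (k+1) x, ?_, ?_, ?_, ?_, ?_, ?_, ?_⟩
    · intro i
      rcases eq_or_ne i (k+1) with h | h
      · rw [h, Function.update_self]; exact hxe
      · rw [Function.update_of_ne h]; exact hue i
    · rw [Function.update_self]; exact hx0'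
    · rw [Function.update_self]; exact hxr
    · rw [Function.update_self]; exact hxinv
    · rw [Function.update_of_ne (by omega)]; exact hu1
    · rw [Function.update_of_ne (by omega)]; exact hu2
    · intro i h3 hik
      rcases eq_or_ne i (k+1) with h | h
      · subst h
        have hi1 : k + 1 - 1 = k := by omega
        rw [hi1, Function.update_self, Function.update_of_ne (by omega)]
        exact ⟨hxt1, hxt2⟩
      · have hik' : i ≤ k := by omega
        rw [Function.update_of_ne h, Function.update_of_ne (by omega : i - 1 ≠ k + 1)]
        exact humid i h3 hik'

private lemma split (n : ℕ) (hn : 4 ≤ n) (w : ℕ → ℕ) (hw : ∀ i, Even (w i))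
    (m : ℕ) (hm : 2 ≤ m) (r : ℕ → ℤ) (hr : MemPwDilate n m w r)
    (hrev : ∀ i, 2 ≤ i → i ≤ n - 2 → Even (r i)) :
    ∃ u : ℕ → ℤ, (∀ i, Even (u i)) ∧ MemPw n w u ∧
      MemPwDilate n (m - 1) w (fun i => r i - u i) := by
  have hmz : (2:ℤ) ≤ (m:ℤ) := by exact_mod_cast hm
  have h22 : 2 ≤ n - 2 := by omega
  obtain ⟨u, hue, hu0, hur0, huinv, hu1, hu2, humid⟩ :=
    chain n w m hm r hr hw hrev (n - 2) h22 le_rfl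
  have hlast : TriIneq (r (n-2) - u (n-2)) (((m:ℤ)-1) * w (n-1)) (((m:ℤ)-1) * w n) ∧
      TriIneq (u (n-2)) (w (n-1)) (w n) := by
    have htri' : TriIneq ((r (n-2) - u (n-2)) + u (n-2)) ((m:ℤ) * w (n-1)) ((m:ℤ) * w n) :=
      hr.2.1.of_eq (by ring) (by push_cast; ring) (by push_cast; ring)
    have hf := final_step (m := (m:ℤ)) (s := u (n-2)) (S := r (n-2) - u (n-2))
      (w := (w (n-1) : ℤ)) (z := (w n : ℤ)) hmz
      (hue _) (by exact_mod_cast hw (n-1)) (by exact_mod_cast hw n)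
      (by rw [show r (n-2) - u (n-2) - ((m:ℤ) - 1) * u (n-2) = r (n-2) - (m:ℤ) * u (n-2) from by ring]; exact huinv)
      htri'
    exact ⟨hf.2, hf.1⟩
  have hc : ∀ j : ℕ, (((m - 1) * w j : ℕ) : ℤ) = ((m:ℤ) - 1) * (w j : ℤ) := by
    intro j
    push_cast [Nat.cast_sub (show 1 ≤ m by omega)]
    ring
  refine ⟨u, hue, ⟨hu1, hlast.2, fun i h3 hi => (humid i h3 hi).1⟩, ?_, ?_, ?_⟩
  · exact hu2.of_eq (hc 1).symm (hc 2).symm rfl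
  · exact hlast.1.of_eq rfl (hc (n-1)).symm (hc n).symm
  · intro i h3 hi
    exact (humid i h3 hi).2.of_eq rfl (hc i).symm rfl

/-- P_w is normal with respect to M = (2ℤ)^{n−3}: for m ≥ 1, every lattice point of
m·P_w ∩ M is a sum of m lattice points of P_w ∩ M. -/
theorem stmt13 (n : ℕ) (hn : 4 ≤ n) (w : ℕ → ℕ) (hw : ∀ i, Even (w i))
    (m : ℕ) (hm : 1 ≤ m) (r : ℕ → ℤ) (hr : MemPwDilate n m w r)
    (hrev : ∀ i, 2 ≤ i → i ≤ n - 2 → Even (r i)) :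
    ∃ u : Fin m → ℕ → ℤ,
      (∀ t, MemPw n w (u t) ∧ ∀ i, 2 ≤ i → i ≤ n - 2 → Even (u t i)) ∧
      ∀ i, 2 ≤ i → i ≤ n - 2 → ∑ t, u t i = r i := by
  induction m, hm using Nat.le_induction generalizing r with
  | base =>
    refine ⟨fun _ => r, fun t => ⟨?_, fun i h2 hi => hrev i h2 hi⟩, fun i h2 hi => by simp⟩
    obtain ⟨h1, h2, h3⟩ := hr
    exact ⟨h1.of_eq (by push_cast; ring) (by push_cast; ring) rfl,
      h2.of_eq rfl (by push_cast; ring) (by push_cast; ring),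
      fun i hi3 hi => (h3 i hi3 hi).of_eq rfl (by push_cast; ring) rfl⟩
  | succ m hm1 ih =>
    obtain ⟨u0, hu0e, hu0mem, hu0res⟩ :=
      split n hn w hw (m + 1) (by omega) r hr hrev
    have hres' : MemPwDilate n m w (fun i => r i - u0 i) := by
      have h : m + 1 - 1 = m := by omega
      rwa [h] at hu0res
    obtain ⟨v, hv1, hv2⟩ := ih (fun i => r i - u0 i) hres'
      (fun i h2 hi => (hrev i h2 hi).sub (hu0e i))
    refine ⟨Fin.cons u0 v, ?_, ?_⟩
    · intro t
      refine Fin.cases ?_ ?_ t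
      · simpa using ⟨hu0mem, fun i _ _ => hu0e i⟩
      · intro j
        simpa using hv1 j
    · intro i h2 hi
      rw [Fin.sum_univ_succ]
      simp only [Fin.cons_zero, Fin.cons_succ]
      have := hv2 i h2 hi
      linarith [this]
end

section
/- Let n ≥ 4, m ≥ 1, w ∈ (2ℕ)ⁿ, and r ∈ mP_w ∩ (2ℤ)^{n−3}. Let σ: {2,…,n−2} → {+,−} be a sequence of signs such that σ(i+1) = −σ(i) exactly when r(i)/m and r(i+1)/m are both odd integers with r(i)/m + r(i+1)/m = w_{i+1}. Then the point u with u(i) = e^{σ(i)}(r(i)/m), where e^σ rounds to the nearest even integer (e⁺ rounding odd integers up, e⁻ rounding them down), lies in P_w ∩ (2ℤ)^{n−3}. -/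
/-- e^σ : ℚ → ℤ, rounding to the nearest even integer; for σ = true (+) odd integers
round up, for σ = false (−) they round down. -/
def er (σ : Bool) (x : ℚ) : ℤ := if σ then 2 * round (x / 2) else -(2 * round (-x / 2))

lemma er_even (σ : Bool) (x : ℚ) : Even (er σ x) := by
  cases σ <;> simp [er, parity_simps]

lemma er_le (σ : Bool) (x : ℚ) : (er σ x : ℚ) ≤ x + 1 := by
  cases σ <;> simp only [er, round_eq, if_true, if_false, Bool.false_eq_true] <;> push_cast
  · have h := Int.sub_one_lt_floor (-x/2 + 1/2)
    linarith
  · have h := Int.floor_le (x/2 + 1/2)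
    linarith

lemma le_er (σ : Bool) (x : ℚ) : x - 1 ≤ (er σ x : ℚ) := by
  cases σ <;> simp only [er, round_eq, if_true, if_false, Bool.false_eq_true] <;> push_cast
  · have h := Int.floor_le (-x/2 + 1/2)
    linarith
  · have h := Int.sub_one_lt_floor (x/2 + 1/2)
    linarith

lemma er_false_lt (x : ℚ) : (er false x : ℚ) < x + 1 := by
  simp only [er, round_eq, if_false, Bool.false_eq_true]
  push_cast
  have h := Int.sub_one_lt_floor (-x/2 + 1/2)
  linarith

lemma lt_er_true (x : ℚ) : x - 1 < (er true x : ℚ) := by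
  simp only [er, round_eq, if_true]
  push_cast
  have h := Int.sub_one_lt_floor (x/2 + 1/2)
  linarith

lemma er_true_odd (x : ℚ) (h : (er true x : ℚ) = x + 1) : ∃ k : ℤ, x = 2*k+1 := by
  simp only [er, round_eq, if_true] at h
  refine ⟨⌊x/2 + 1/2⌋ - 1, ?_⟩
  push_cast at h ⊢
  linarith

lemma er_false_odd (x : ℚ) (h : (er false x : ℚ) = x - 1) : ∃ k : ℤ, x = 2*k+1 := by
  simp only [er, round_eq, if_false, Bool.false_eq_true] at h
  refine ⟨-⌊-x/2 + 1/2⌋, ?_⟩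
  push_cast at h ⊢
  linarith


lemma er_mid (m : ℕ) (hm : 1 ≤ m) (W ra rb : ℤ) (hW : Even W)
    (σa σb : Bool)
    (tri : TriIneq ra ((m : ℤ) * W) rb)
    (hiff : (σb = !σa) ↔ ∃ a b : ℤ, ra = m * (2 * a + 1) ∧ rb = m * (2 * b + 1) ∧
      (2 * a + 1) + (2 * b + 1) = W) :
    TriIneq (er σa ((ra : ℚ) / (m : ℚ))) W (er σb ((rb : ℚ) / (m : ℚ))) := by
  have hq : (0 : ℚ) < (m : ℚ) := by exact_mod_cast hm
  have hqdef : ((m:ℚ)) = (m:ℚ) := rfl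
  set xa : ℚ := (ra : ℚ) / (m:ℚ) with hxa
  set xb : ℚ := (rb : ℚ) / (m:ℚ) with hxb
  obtain ⟨t1, t2, t3⟩ := tri
  -- rational versions of the triangle inequalities
  have hT1 : xb ≤ xa + W := by
    rw [hxa, hxb, div_add' _ _ _ (ne_of_gt hq), div_le_div_iff₀ hq hq]
    have : (rb : ℚ) ≤ ra + (m:ℚ) * W := by exact_mod_cast t1
    nlinarith
  have hT2 : xa ≤ xb + W := by
    rw [hxa, hxb, div_add' _ _ _ (ne_of_gt hq), div_le_div_iff₀ hq hq]
    have : (ra : ℚ) ≤ rb + (m:ℚ) * W := by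
      have : (ra : ℚ) ≤ (m:ℚ) * W + rb := by exact_mod_cast t3
      linarith
    nlinarith
  have hT3 : (W : ℚ) ≤ xa + xb := by
    rw [hxa, hxb, div_add_div _ _ (ne_of_gt hq) (ne_of_gt hq), le_div_iff₀ (by positivity)]
    have : (m:ℚ) * W ≤ ra + rb := by exact_mod_cast t2
    nlinarith
  have hua1 := er_le σa xa
  have hua2 := le_er σa xa
  have hub1 := er_le σb xb
  have hub2 := le_er σb xb
  set ua : ℤ := er σa xa with hua
  set ub : ℤ := er σb xb with hub
  obtain ⟨ka, hka⟩ := er_even σa xa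
  obtain ⟨kb, hkb⟩ := er_even σb xb
  obtain ⟨kw, hkw⟩ := hW
  rw [← hua] at hka; rw [← hub] at hkb
  -- the odd-sum extraction helper
  have getodd : ∀ (s : Bool) (x : ℚ) (rr : ℤ), x = (rr : ℚ) / (m:ℚ) →
      (er s x : ℚ) = x - 1 → s = false ∧ ∃ k : ℤ, rr = m * (2 * k + 1) := by
    intro s x rr hx he
    cases s with
    | true => exact absurd he (by have := lt_er_true x; intro h; linarith)
    | false =>
      obtain ⟨k, hk⟩ := er_false_odd x he
      refine ⟨rfl, k, ?_⟩
      have : (rr : ℚ) = (m:ℚ) * (2 * k + 1) := by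
        rw [hx] at hk; field_simp at hk; linarith [hk]
      exact_mod_cast this
  refine ⟨?_, ?_, ?_⟩
  · -- ub ≤ ua + W
    by_contra hcon
    push_neg at hcon
    have hcon2 : ua + W + 2 ≤ ub := by omega
    have hconq : (ua : ℚ) + W + 2 ≤ ub := by exact_mod_cast hcon2
    -- forced equalities
    have e1 : (ub : ℚ) = xb + 1 := by linarith
    have e2 : (ua : ℚ) = xa - 1 := by linarith
    have e3 : xb = xa + W := by linarith
    obtain ⟨hsa, a, hra⟩ := getodd σa xa ra hxa e2
    have hsb : σb = true := by
      cases σb with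
      | false => exact absurd e1 (by have := er_false_lt xb; intro h; linarith)
      | true => rfl
    obtain ⟨b, hb⟩ := er_true_odd xb (by rw [← hsb]; exact e1)
    have hrb : rb = m * (2 * b + 1) := by
      have : (rb : ℚ) = (m:ℚ) * (2 * b + 1) := by
        rw [hxb] at hb; field_simp at hb; linarith [hb]
      exact_mod_cast this
    have hsum := hiff.mp (by rw [hsa, hsb]; rfl)
    obtain ⟨a', b', ha', hb', hsum'⟩ := hsum
    -- xa = 2a'+1, xb = 2b'+1
    have hxa' : xa = ((2 * a' + 1 : ℤ) : ℚ) := by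
      rw [hxa, ha']; push_cast; field_simp
    have hxb' : xb = ((2 * b' + 1 : ℤ) : ℚ) := by
      rw [hxb, hb']; push_cast; field_simp
    -- diff = W and sum = W gives 2a'+1 = 0, absurd
    have : ((2 * b' + 1 : ℤ) : ℚ) = ((2 * a' + 1 : ℤ) : ℚ) + W := by
      rw [← hxa', ← hxb']; exact e3
    have hdiff : (2 * b' + 1) = (2 * a' + 1) + W := by exact_mod_cast this
    omega
  · -- W ≤ ua + ub
    by_contra hcon
    push_neg at hcon
    have hcon2 : ua + ub ≤ W - 2 := by omega
    have hconq : (ua : ℚ) + ub ≤ (W : ℚ) - 2 := by exact_mod_cast hcon2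
    have e2 : (ua : ℚ) = xa - 1 := by linarith
    have e1 : (ub : ℚ) = xb - 1 := by linarith
    have e3 : (W : ℚ) = xa + xb := by linarith
    obtain ⟨hsa, a, hra⟩ := getodd σa xa ra hxa e2
    obtain ⟨hsb, b, hrb⟩ := getodd σb xb rb hxb e1
    have hxa' : xa = ((2 * a + 1 : ℤ) : ℚ) := by
      rw [hxa, hra]; push_cast; field_simp
    have hxb' : xb = ((2 * b + 1 : ℤ) : ℚ) := by
      rw [hxb, hrb]; push_cast; field_simp
    have hsum : (2 * a + 1) + (2 * b + 1) = W := by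
      have : ((2 * a + 1 : ℤ) : ℚ) + ((2 * b + 1 : ℤ) : ℚ) = (W : ℚ) := by
        rw [← hxa', ← hxb']; linarith
      exact_mod_cast this
    have := hiff.mpr ⟨a, b, hra, hrb, hsum⟩
    rw [hsa, hsb] at this
    simp at this
  · -- ua ≤ W + ub
    by_contra hcon
    push_neg at hcon
    have hcon2 : ub + W + 2 ≤ ua := by omega
    have hconq : (ub : ℚ) + W + 2 ≤ ua := by exact_mod_cast hcon2
    have e1 : (ua : ℚ) = xa + 1 := by linarith
    have e2 : (ub : ℚ) = xb - 1 := by linarith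
    have e3 : xa = xb + W := by linarith
    obtain ⟨hsb, b, hrb⟩ := getodd σb xb rb hxb e2
    have hsa : σa = true := by
      cases σa with
      | false => exact absurd e1 (by have := er_false_lt xa; intro h; linarith)
      | true => rfl
    obtain ⟨a, ha⟩ := er_true_odd xa (by rw [← hsa]; exact e1)
    have hra : ra = m * (2 * a + 1) := by
      have : (ra : ℚ) = (m:ℚ) * (2 * a + 1) := by
        rw [hxa] at ha; field_simp at ha; linarith [ha]
      exact_mod_cast this
    have hsum := hiff.mp (by rw [hsa, hsb]; rfl)
    obtain ⟨a', b', ha', hb', hsum'⟩ := hsum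
    have hxa' : xa = ((2 * a' + 1 : ℤ) : ℚ) := by
      rw [hxa, ha']; push_cast; field_simp
    have hxb' : xb = ((2 * b' + 1 : ℤ) : ℚ) := by
      rw [hxb, hb']; push_cast; field_simp
    have : ((2 * a' + 1 : ℤ) : ℚ) = ((2 * b' + 1 : ℤ) : ℚ) + W := by
      rw [← hxa', ← hxb']; exact e3
    have hdiff : (2 * a' + 1) = (2 * b' + 1) + W := by exact_mod_cast this
    omega

lemma er_bd1 (m : ℕ) (hm : 1 ≤ m) (A B rc : ℤ) (hA : Even A) (hB : Even B) (σ : Bool)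
    (tri : TriIneq ((m : ℤ) * A) ((m : ℤ) * B) rc) :
    TriIneq A B (er σ ((rc : ℚ) / (m : ℚ))) := by
  have hq : (0 : ℚ) < (m : ℚ) := by exact_mod_cast hm
  set xc : ℚ := (rc : ℚ) / (m : ℚ) with hxc
  obtain ⟨t1, t2, t3⟩ := tri
  have hxc1 : xc ≤ A + B := by
    rw [hxc, div_le_iff₀ hq]
    have : (rc : ℚ) ≤ (m:ℚ) * A + (m:ℚ) * B := by exact_mod_cast t1
    nlinarith
  have hxc2 : (B : ℚ) - A ≤ xc := by
    rw [hxc, le_div_iff₀ hq]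
    have : (m:ℚ) * B ≤ (m:ℚ) * A + rc := by exact_mod_cast t2
    nlinarith
  have hxc3 : (A : ℚ) - B ≤ xc := by
    rw [hxc, le_div_iff₀ hq]
    have : (m:ℚ) * A ≤ (m:ℚ) * B + rc := by exact_mod_cast t3
    nlinarith
  have h1 := er_le σ xc
  have h2 := le_er σ xc
  set uc : ℤ := er σ xc with huc
  obtain ⟨kc, hkc⟩ := er_even σ xc
  rw [← huc] at hkc
  obtain ⟨ka, hka⟩ := hA
  obtain ⟨kb, hkb⟩ := hB
  have g1 : (uc : ℚ) ≤ A + B + 1 := by linarith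
  have g2 : (B : ℚ) - A - 1 ≤ uc := by linarith
  have g3 : (A : ℚ) - B - 1 ≤ uc := by linarith
  have g1' : uc ≤ A + B + 1 := by exact_mod_cast g1
  have g2' : B - A - 1 ≤ uc := by exact_mod_cast g2
  have g3' : A - B - 1 ≤ uc := by exact_mod_cast g3
  refine ⟨by omega, by omega, by omega⟩

lemma er_bd2 (m : ℕ) (hm : 1 ≤ m) (ra B C : ℤ) (hB : Even B) (hC : Even C) (σ : Bool)
    (tri : TriIneq ra ((m : ℤ) * B) ((m : ℤ) * C)) :
    TriIneq (er σ ((ra : ℚ) / (m : ℚ))) B C := by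
  have hq : (0 : ℚ) < (m : ℚ) := by exact_mod_cast hm
  set xa : ℚ := (ra : ℚ) / (m : ℚ) with hxa
  obtain ⟨t1, t2, t3⟩ := tri
  have hx1 : (C : ℚ) - B ≤ xa := by
    rw [hxa, le_div_iff₀ hq]
    have : (m:ℚ) * C ≤ ra + (m:ℚ) * B := by exact_mod_cast t1
    nlinarith
  have hx2 : (B : ℚ) - C ≤ xa := by
    rw [hxa, le_div_iff₀ hq]
    have : (m:ℚ) * B ≤ ra + (m:ℚ) * C := by exact_mod_cast t2
    nlinarith
  have hx3 : xa ≤ B + C := by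
    rw [hxa, div_le_iff₀ hq]
    have : (ra : ℚ) ≤ (m:ℚ) * B + (m:ℚ) * C := by exact_mod_cast t3
    nlinarith
  have h1 := er_le σ xa
  have h2 := le_er σ xa
  set ua : ℤ := er σ xa with hua
  obtain ⟨ka, hka⟩ := er_even σ xa
  rw [← hua] at hka
  obtain ⟨kb, hkb⟩ := hB
  obtain ⟨kc, hkc⟩ := hC
  have g1 : (C : ℚ) - B - 1 ≤ ua := by linarith
  have g2 : (B : ℚ) - C - 1 ≤ ua := by linarith
  have g3 : (ua : ℚ) ≤ B + C + 1 := by linarith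
  have g1' : C - B - 1 ≤ ua := by exact_mod_cast g1
  have g2' : B - C - 1 ≤ ua := by exact_mod_cast g2
  have g3' : ua ≤ B + C + 1 := by exact_mod_cast g3
  refine ⟨by omega, by omega, by omega⟩

/-- Let r ∈ m·P_w ∩ (2ℤ)^{n−3} and let σ be an admissible sequence of signs (σ(i+1) = −σ(i)
exactly when r(i)/m and r(i+1)/m are odd integers with r(i)/m + r(i+1)/m = w_{i+1}).
Then u(i) = e^{σ(i)}(r(i)/m) defines a point of P_w ∩ (2ℤ)^{n−3}. -/
theorem stmt14 (n : ℕ) (hn : 4 ≤ n) (w : ℕ → ℕ) (hw : ∀ i, Even (w i))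
    (m : ℕ) (hm : 1 ≤ m) (r : ℕ → ℤ) (hr : MemPwDilate n m w r)
    (hrev : ∀ i, 2 ≤ i → i ≤ n - 2 → Even (r i))
    (σ : ℕ → Bool)
    (hσ : ∀ i, 2 ≤ i → i + 1 ≤ n - 2 →
      ((σ (i + 1) = !σ i) ↔
        ∃ a b : ℤ, r i = m * (2 * a + 1) ∧ r (i + 1) = m * (2 * b + 1) ∧
          (2 * a + 1) + (2 * b + 1) = (w (i + 1) : ℤ))) :
    MemPw n w (fun i => er (σ i) ((r i : ℚ) / (m : ℚ))) ∧
      ∀ i, 2 ≤ i → i ≤ n - 2 → Even (er (σ i) ((r i : ℚ) / (m : ℚ))) := by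
  constructor
  · refine ⟨?_, ?_, ?_⟩
    · have H1 := hr.1
      exact er_bd1 m hm (w 1) (w 2) (r 2) ((Int.even_coe_nat _).mpr (hw 1))
        ((Int.even_coe_nat _).mpr (hw 2)) (σ 2) H1
    · have H2 := hr.2.1
      exact er_bd2 m hm (r (n - 2)) (w (n - 1)) (w n) ((Int.even_coe_nat _).mpr (hw (n - 1)))
        ((Int.even_coe_nat _).mpr (hw n)) (σ (n - 2)) H2
    · intro i h3 h2
      have H := hr.2.2 i h3 h2
      have hs := hσ (i - 1) (by omega) (by omega)
      have e : i - 1 + 1 = i := by omega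
      rw [e] at hs
      exact er_mid m hm (w i) (r (i - 1)) (r i) ((Int.even_coe_nat _).mpr (hw i))
        (σ (i - 1)) (σ i) H hs
  · intro i _ _
    exact er_even _ _
end

section
/- Let n ≥ 4, w ∈ (2ℕ)ⁿ, and u, v ∈ P_w ∩ (2ℤ)^{n−3}. Let 3 ≤ j ≤ n−2 and suppose (u(j−1), w_j, v(j)) and (v(j−1), w_j, u(j)) satisfy the triangle inequalities. Then the swapped points u' = (u(2),…,u(j−1), v(j),…,v(n−2)) and v' = (v(2),…,v(j−1), u(j),…,u(n−2)) both lie in P_w ∩ (2ℤ)^{n−3}, and u' + v' = u + v. -/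
lemma swap_memPw (n : ℕ) (hn : 4 ≤ n) (w : ℕ → ℕ)
    (u v : ℕ → ℤ) (hu : MemPw n w u) (hv : MemPw n w v)
    (j : ℕ) (hj : 3 ≤ j) (hj' : j ≤ n - 2)
    (h1 : TriIneq (u (j - 1)) (w j) (v j)) :
    MemPw n w (fun i => if i < j then u i else v i) := by
  refine ⟨?_, ?_, ?_⟩
  · simpa [show (2:ℕ) < j by omega] using hu.1
  · simpa [show ¬ (n - 2 < j) by omega] using hv.2.1
  · intro i hi3 hin
    rcases lt_trichotomy i j with h | h | h
    · simpa [show i - 1 < j by omega, h] using hu.2.2 i hi3 hin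
    · subst h
      simpa [show i - 1 < i by omega, show 0 < i by omega, lt_irrefl i] using h1
    · have := hv.2.2 i hi3 hin
      simpa [show ¬ (i - 1 < j) by omega, show ¬ (i < j) by omega] using this

/-- Type B swaps are well-defined: if u, v ∈ P_w ∩ (2ℤ)^{n−3}, 3 ≤ j ≤ n−2, and
(u(j−1), w_j, v(j)) and (v(j−1), w_j, u(j)) satisfy the triangle inequalities, then
u' = (u(2),…,u(j−1),v(j),…,v(n−2)) and v' = (v(2),…,v(j−1),u(j),…,u(n−2)) lie in
P_w ∩ (2ℤ)^{n−3} and u' + v' = u + v. -/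
theorem stmt15 (n : ℕ) (hn : 4 ≤ n) (w : ℕ → ℕ) (hw : ∀ i, Even (w i))
    (u v : ℕ → ℤ) (hu : MemPw n w u) (hv : MemPw n w v)
    (huev : ∀ i, 2 ≤ i → i ≤ n - 2 → Even (u i))
    (hvev : ∀ i, 2 ≤ i → i ≤ n - 2 → Even (v i))
    (j : ℕ) (hj : 3 ≤ j) (hj' : j ≤ n - 2)
    (h1 : TriIneq (u (j - 1)) (w j) (v j))
    (h2 : TriIneq (v (j - 1)) (w j) (u j)) :
    MemPw n w (fun i => if i < j then u i else v i) ∧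
    MemPw n w (fun i => if i < j then v i else u i) ∧
    (∀ i, 2 ≤ i → i ≤ n - 2 →
      Even (if i < j then u i else v i) ∧ Even (if i < j then v i else u i)) ∧
    (∀ i, (if i < j then u i else v i) + (if i < j then v i else u i) = u i + v i) := by
  refine ⟨swap_memPw n hn w u v hu hv j hj hj' h1,
    swap_memPw n hn w v u hv hu j hj hj' h2, ?_, ?_⟩
  · intro i h2i hin
    by_cases h : i < j <;> simp [h, huev i h2i hin, hvev i h2i hin]
  · intro i
    by_cases h : i < j <;> simp [h, add_comm]
end

section
/- The power series expansion of 1/H(−z), where H(z) = (1 + 8z + 22z² + 8z³ + z⁴)/(1−z)⁶, has a negative coefficient: specifically the coefficient of z⁷ is −62320. Consequently H(−z)·P(z) = 1 has no solution P with all coefficients nonnegative. -/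
/-!
The coefficients of `B / D` up to degree `n` are those of any `q` with `D * q ≡ B mod Xⁿ⁺¹`,
so the coefficient of `X⁷` in `(1 + X)⁶ / D` is read off an explicit polynomial certificate.
A nonnegative solution `P` of `D * P = (1 + X)⁶` would equal `(1 + X)⁶ / D`, which has this
negative coefficient.
-/

namespace PowerSeries

theorem coeff_mul_inv_eq_of_mul_eq_add_X_pow_mul {k : Type*} [Field k] {D B q r : k⟦X⟧}
    (n : ℕ) (hD : constantCoeff D ≠ 0) (h : D * q = B + X ^ (n + 1) * r) :
    coeff n (B * D⁻¹) = coeff n q := by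
  have hq : q - X ^ (n + 1) * (r * D⁻¹) = B * D⁻¹ := by
    refine (eq_mul_inv_iff_mul_eq hD).2 ?_
    rw [sub_mul, mul_assoc, mul_assoc, PowerSeries.inv_mul_cancel _ hD, mul_one, mul_comm q, h]
    ring
  rw [← hq, map_sub, coeff_X_pow_mul', if_neg (by omega), sub_zero]

theorem not_exists_nonneg_mul_eq_of_coeff_neg {k : Type*} [Field k] [Preorder k]
    {D B : k⟦X⟧} {n : ℕ} (hD : constantCoeff D ≠ 0) (hn : coeff n (B * D⁻¹) < 0) :
    ¬ ∃ P : k⟦X⟧, (∀ m, 0 ≤ coeff m P) ∧ D * P = B := by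
  rintro ⟨P, hP, hDP⟩
  have hPeq : P = B * D⁻¹ := (eq_mul_inv_iff_mul_eq hD).2 ((mul_comm P D).trans hDP)
  exact (hP n).not_gt (hPeq ▸ hn)

end PowerSeries

open PowerSeries in
/-- The power series 1/H(−z), where H(z) = (1 + 8z + 22z² + 8z³ + z⁴)/(1−z)⁶ is the
Hilbert series of R_{1⁸} — i.e. the series (1+z)⁶/(1 − 8z + 22z² − 8z³ + z⁴) — has
coefficient −62320 at z⁷; consequently H(−z)·P(z) = 1 has no solution P with
nonnegative coefficients. -/
theorem stmt19 :
    (PowerSeries.coeff (R := ℚ) 7)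
        ((1 + X) ^ 6 *
          (1 - 8 * X + 22 * X ^ 2 - 8 * X ^ 3 + X ^ 4 : PowerSeries ℚ)⁻¹)
      = -62320 ∧
    ¬ ∃ P : PowerSeries ℚ, (∀ k, 0 ≤ PowerSeries.coeff (R := ℚ) k P) ∧
        (1 - 8 * X + 22 * X ^ 2 - 8 * X ^ 3 + X ^ 4 : PowerSeries ℚ) * P
          = (1 + X) ^ 6 := by
  set D : ℚ⟦X⟧ := 1 - 8 * X + 22 * X ^ 2 - 8 * X ^ 3 + X ^ 4 with hD_def
  have hD : constantCoeff D ≠ 0 := by simp [hD_def]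
  have hcoeff : coeff 7 ((1 + X) ^ 6 * D⁻¹) = -62320 := by
    rw [coeff_mul_inv_eq_of_mul_eq_add_X_pow_mul 7 hD
      (q := 1 + 14 * X + 105 * X ^ 2 + 560 * X ^ 3 + 2296 * X ^ 4 + 6880 * X ^ 5 + 8904 * X ^ 6
        - 62320 * X ^ 7)
      (r := 641704 - 1435392 * X + 507464 * X ^ 2 - 62320 * X ^ 3) (by rw [hD_def]; ring)]
    simp [coeff_X_pow, ← map_ofNat (C (R := ℚ)), coeff_C_mul]
  exact ⟨hcoeff, not_exists_nonneg_mul_eq_of_coeff_neg hD (by rw [hcoeff]; norm_num)⟩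
end
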